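/- Let p be a prime, P a finite p-group, and M a nonzero F_p P-module on which P acts uniserially, of length ℓ. For an F_p P-submodule N of M^n, the following are equivalent: (1) N is a direct summand of M^n; (2) the F_p-vector spaces (N + [P,M^n])/[P,M^n] and C_N(P) have the same dimension; (3) there exists a subset Z ⊆ {1,…,n} such that M^n = N ⊕ M_Z. Moreover, if these hold and L is any complement of N as a submodule of M^n, then L ⋊ P is a complement of the normal subgroup N in the semidirect product M^n ⋊ P. -/

import Mathlib

variable (p : ℕ) (P : Type) [Group P]
variable (M : Type) [AddCommGroup M] [Module (ZMod p) M]
  [Module (MonoidAlgebra (ZMod p) P) M]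
  [IsScalarTower (ZMod p) (MonoidAlgebra (ZMod p) P) M]

/-- The fixed-point subspace `C_M(P)` of an `F_p P`-module `M`. -/
def fixedPts : Submodule (ZMod p) M where
  carrier := {m | ∀ g : P, MonoidAlgebra.of (ZMod p) P g • m = m}
  add_mem' := by
    intro a b ha hb g
    rw [smul_add, ha g, hb g]
  zero_mem' := by
    intro g
    rw [smul_zero]
  smul_mem' := by
    intro c m hm g
    rw [← algebraMap_smul (MonoidAlgebra (ZMod p) P) c m, ← mul_smul, ← Algebra.commutes,
      mul_smul, hm g, algebraMap_smul]

/-- The submodule `[P, N]` of an `F_p P`-module `M` spanned by the elements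
`g • m - m` with `g ∈ P`, `m ∈ N`. -/
noncomputable def bracketSub (N : Submodule (MonoidAlgebra (ZMod p) P) M) :
    Submodule (MonoidAlgebra (ZMod p) P) M :=
  Submodule.span (MonoidAlgebra (ZMod p) P)
    {x | ∃ g : P, ∃ m ∈ N, x = MonoidAlgebra.of (ZMod p) P g • m - m}

/-- An `F_p P`-module `M` is uniserial if `[P, N]` has (additive) index `p` in `N`
for every nonzero submodule `N` of `M`. -/
def UniserialFpP : Prop :=
  ∀ N : Submodule (MonoidAlgebra (ZMod p) P) M, N ≠ ⊥ →
    (bracketSub p P M N).toAddSubgroup.relIndex N.toAddSubgroup = p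


variable (n : ℕ)

/-- The coordinate submodule `M_Z = {u ∈ M^n : u i = 0 for i ∉ Z}`. -/
def coordSub (Z : Set (Fin n)) :
    Submodule (MonoidAlgebra (ZMod p) P) (Fin n → M) where
  carrier := {u | ∀ i ∉ Z, u i = 0}
  add_mem' := by
    intro a b ha hb i hi
    rw [Pi.add_apply, ha i hi, hb i hi, add_zero]
  zero_mem' := by
    intro i _
    rfl
  smul_mem' := by
    intro r u hu i hi
    rw [Pi.smul_apply, hu i hi, smul_zero]

/-- The additive automorphism of `M^n` given by the action of `g ∈ P`. -/
noncomputable def pActEquiv (g : P) : (Fin n → M) ≃+ (Fin n → M) where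
  toFun x := MonoidAlgebra.of (ZMod p) P g • x
  invFun x := MonoidAlgebra.of (ZMod p) P g⁻¹ • x
  left_inv x := by
    show MonoidAlgebra.of (ZMod p) P g⁻¹ • MonoidAlgebra.of (ZMod p) P g • x = x
    rw [← mul_smul, ← map_mul, inv_mul_cancel, map_one, one_smul]
  right_inv x := by
    show MonoidAlgebra.of (ZMod p) P g • MonoidAlgebra.of (ZMod p) P g⁻¹ • x = x
    rw [← mul_smul, ← map_mul, mul_inv_cancel, map_one, one_smul]
  map_add' x y := smul_add _ x y

/-- The action of `P` on `Multiplicative (M^n)`, used to form `M^n ⋊ P`. -/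
noncomputable def pMulAut : P →* MulAut (Multiplicative (Fin n → M)) :=
  MonoidHom.mk' (fun g => AddEquiv.toMultiplicative (pActEquiv p P M n g)) (by
    intro a b
    apply MulEquiv.ext
    intro x
    show MonoidAlgebra.of (ZMod p) P (a * b) • (x.toAdd)
      = MonoidAlgebra.of (ZMod p) P a • MonoidAlgebra.of (ZMod p) P b • (x.toAdd)
    rw [map_mul, mul_smul])


/-- The semidirect product `M^n ⋊ P`. -/
abbrev SDP := Multiplicative (Fin n → M) ⋊[pMulAut p P M n] P

/-- A submodule of `M^n` viewed as a subgroup of `M^n ⋊ P`. -/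
noncomputable def liftSub (N : Submodule (MonoidAlgebra (ZMod p) P) (Fin n → M)) :
    Subgroup (SDP p P M n) :=
  Subgroup.map SemidirectProduct.inl (AddSubgroup.toSubgroup N.toAddSubgroup)

/-- The subgroup `L ⋊ P` of `M^n ⋊ P` generated by a submodule `L ≤ M^n`
and the complementary copy of `P`. -/
noncomputable def semiCompl (L : Submodule (MonoidAlgebra (ZMod p) P) (Fin n → M)) :
    Subgroup (SDP p P M n) :=
  Subgroup.map SemidirectProduct.inl (AddSubgroup.toSubgroup L.toAddSubgroup) ⊔
    (SemidirectProduct.inr : P →* SDP p P M n).range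

/-!
Uniseriality makes each step of `M ⊋ [P, M] ⊋ [P, [P, M]] ⊋ ⋯` drop the dimension by one, and
applied to `C_M(P)` (nonzero by the fixed-point theorem) it gives `dim C_M(P) = 1`. A product
`z = (g₁ - 1) ⋯ (g_{ℓ-1} - 1)` acting nontrivially on `M` therefore has kernel `[P, M]` and image
`C_M(P)`, and acting diagonally it induces `M^n / [P, M^n] ≅ C_{M^n}(P)`.

Since `z • N ⊆ C_N(P)`, always `dim (N + [P, M^n]) / [P, M^n] ≤ dim C_N(P)`; for a complement `L`
the two left-hand sides add up to at least `n` and the two right-hand sides to at most `n`, which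
gives (1) ⇒ (2). Under (2), `z • N = C_N(P)`, as for every direct summand such as `M_Z`. Choose
`Z` so that the image of `M_Z` in `M^n / [P, M^n]`, a sum of coordinate lines, complements that
of `N`. A nonzero fixed vector of `N ∩ M_Z` would be `z • x = z • y` with `x ∈ N`, `y ∈ M_Z`
having the same image there, so `N ∩ M_Z = 0`; and `N + M_Z + [P, M^n] = M^n` forces
`N + M_Z = M^n` because the bracket series of `M^n` reaches `0`.

In `M^n ⋊ P`, the subgroup `L ⋊ P` lies in `{x | x.left ∈ L}`, which meets `N` trivially, and
`m g = n (l g)` for `m = n + l`.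
-/

open Submodule MonoidAlgebra Module
open scoped Pointwise

section Bracket

variable {p P} {E F : Type} [AddCommGroup E] [Module (ZMod p)[P] E] [AddCommGroup F]
  [Module (ZMod p)[P] F]

theorem bracketSub_le (N : Submodule (ZMod p)[P] E) : bracketSub p P E N ≤ N :=
  span_le.2 fun _ ⟨_, _, hm, hx⟩ => hx ▸ sub_mem (N.smul_mem _ hm) hm

theorem smul_sub_mem_bracketSub {N : Submodule (ZMod p)[P] E} {m : E} (hm : m ∈ N) (g : P) :
    of (ZMod p) P g • m - m ∈ bracketSub p P E N :=
  subset_span ⟨g, m, hm, rfl⟩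

theorem bracketSub_mono {N N' : Submodule (ZMod p)[P] E} (h : N ≤ N') :
    bracketSub p P E N ≤ bracketSub p P E N' :=
  span_mono fun _ ⟨g, m, hm, hx⟩ => ⟨g, m, h hm, hx⟩

theorem bracketSub_sup_le (N N' : Submodule (ZMod p)[P] E) :
    bracketSub p P E (N ⊔ N') ≤ bracketSub p P E N ⊔ bracketSub p P E N' := by
  refine span_le.2 ?_
  rintro _ ⟨g, _, hm, rfl⟩
  obtain ⟨a, ha, b, hb, rfl⟩ := mem_sup.1 hm
  rw [smul_add, add_sub_add_comm]
  exact add_mem_sup (smul_sub_mem_bracketSub ha g) (smul_sub_mem_bracketSub hb g)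

theorem map_bracketSub_le (f : E →ₗ[(ZMod p)[P]] F) (N : Submodule (ZMod p)[P] E) :
    (bracketSub p P E N).map f ≤ bracketSub p P F (N.map f) := by
  rw [bracketSub, map_span, span_le]
  rintro _ ⟨_, ⟨g, m, hm, rfl⟩, rfl⟩
  simpa using smul_sub_mem_bracketSub (mem_map_of_mem hm : f m ∈ N.map f) g

variable (p P E) in
noncomputable def bracketSeries (i : ℕ) : Submodule (ZMod p)[P] E := (bracketSub p P E)^[i] ⊤

theorem bracketSeries_zero : bracketSeries p P E 0 = ⊤ := rfl

theorem bracketSeries_one : bracketSeries p P E 1 = bracketSub p P E ⊤ := rfl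

theorem bracketSeries_succ (i : ℕ) :
    bracketSeries p P E (i + 1) = bracketSub p P E (bracketSeries p P E i) :=
  Function.iterate_succ_apply' _ _ _

theorem sup_bracketSeries_eq_top {W : Submodule (ZMod p)[P] E}
    (h : W ⊔ bracketSub p P E ⊤ = ⊤) : ∀ i, W ⊔ bracketSeries p P E i = ⊤
  | 0 => sup_top_eq W
  | i + 1 => by
    refine top_unique (h ▸ sup_le le_sup_left ?_)
    calc bracketSub p P E ⊤ = bracketSub p P E (W ⊔ bracketSeries p P E i) := by
          rw [sup_bracketSeries_eq_top h i]
      _ ≤ bracketSub p P E W ⊔ bracketSub p P E (bracketSeries p P E i) := bracketSub_sup_le _ _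
      _ ≤ W ⊔ bracketSeries p P E (i + 1) := by
        rw [bracketSeries_succ]; exact sup_le_sup_right (bracketSub_le W) _

variable (p) in
noncomputable def augProd (l : List P) : (ZMod p)[P] := (l.map fun g => of (ZMod p) P g - 1).prod

theorem augProd_cons_smul (g : P) (l : List P) (m : E) :
    augProd p (g :: l) • m = of (ZMod p) P g • (augProd p l • m) - augProd p l • m := by
  simp [augProd, mul_smul, sub_smul]

theorem augProd_smul_mem_bracketSeries {j : ℕ} {x : E} (hx : x ∈ bracketSeries p P E j) :
    ∀ l : List P, augProd p l • x ∈ bracketSeries p P E (j + l.length)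
  | [] => by simpa [augProd] using hx
  | g :: l => by
    rw [augProd_cons_smul, List.length_cons, ← add_assoc, bracketSeries_succ]
    exact smul_sub_mem_bracketSub (augProd_smul_mem_bracketSeries hx l) g

variable {ι : Type} [Fintype ι]

theorem bracketSub_pi (N : ι → Submodule (ZMod p)[P] E) :
    bracketSub p P (ι → E) (pi Set.univ N) = pi Set.univ fun i => bracketSub p P E (N i) := by
  classical
  refine le_antisymm (span_le.2 ?_) fun u hu => ?_
  · rintro _ ⟨g, u, hu, rfl⟩ i -
    simpa using smul_sub_mem_bracketSub (hu i trivial) g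
  · rw [← Finset.univ_sum_single u]
    refine sum_mem fun i _ => ?_
    have hsingle : (N i).map (LinearMap.single (ZMod p)[P] (fun _ => E) i) ≤ pi Set.univ N := by
      rintro _ ⟨m, hm, rfl⟩ j -
      by_cases hji : j = i
      · subst hji; simpa using hm
      · simp [Pi.single_eq_of_ne hji]
    exact bracketSub_mono hsingle (map_bracketSub_le _ _ (mem_map_of_mem (hu i trivial)))

theorem bracketSeries_pi (i : ℕ) :
    bracketSeries p P (ι → E) i = pi Set.univ fun _ => bracketSeries p P E i := by
  induction i with
  | zero => exact (pi_top _).symm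
  | succ i ih => rw [bracketSeries_succ, ih, bracketSub_pi, bracketSeries_succ]

end Bracket

section VectorSpace

variable {p P} {V : Type} [AddCommGroup V] [Module (ZMod p) V] [Module (ZMod p)[P] V]

theorem restrictScalars_bracketSub (N : Submodule (ZMod p)[P] V) :
    (bracketSub p P V N).restrictScalars (ZMod p) = span (ZMod p)
      (Set.range (of (ZMod p) P) • {x | ∃ g : P, ∃ m ∈ N, x = of (ZMod p) P g • m - m}) :=
  (span_smul_of_span_eq_top (MonoidAlgebra.basis P (ZMod p)).span_eq _).symm

variable (p P V) in
def augProdSmulSet (i : ℕ) : Set V :=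
  {x | ∃ l : List P, l.length = i ∧ ∃ v : V, x = augProd p l • v}

theorem sub_mem_span_augProdSmulSet (i : ℕ) (g : P) {x : V}
    (hx : x ∈ span (ZMod p) (augProdSmulSet p P V i)) :
    of (ZMod p) P g • x - x ∈ span (ZMod p) (augProdSmulSet p P V (i + 1)) := by
  have : span (ZMod p) (augProdSmulSet p P V i) ≤
      (span (ZMod p) (augProdSmulSet p P V (i + 1))).comap
        (Algebra.lsmul (ZMod p) (ZMod p) V (of (ZMod p) P g - 1)) := by
    refine span_le.2 ?_
    rintro _ ⟨l, rfl, v, rfl⟩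
    exact subset_span ⟨g :: l, rfl, v, by simp [augProd_cons_smul]⟩
  simpa [sub_smul] using this hx

theorem restrictScalars_bracketSeries_le_span (i : ℕ) :
    (bracketSeries p P V i).restrictScalars (ZMod p) ≤ span (ZMod p) (augProdSmulSet p P V i) := by
  induction i with
  | zero => exact fun v _ => subset_span ⟨[], rfl, v, by simp [augProd]⟩
  | succ i ih =>
    rw [bracketSeries_succ, restrictScalars_bracketSub, span_le]
    rintro _ ⟨_, ⟨h, rfl⟩, _, ⟨g, m, hm, rfl⟩, rfl⟩
    have e : of (ZMod p) P h • (of (ZMod p) P g • m - m) =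
        (of (ZMod p) P (h * g) • m - m) - (of (ZMod p) P h • m - m) := by
      rw [smul_sub, map_mul, mul_smul]; abel
    beta_reduce
    rw [e]
    exact sub_mem (sub_mem_span_augProdSmulSet i _ (ih hm))
      (sub_mem_span_augProdSmulSet i h (ih hm))

theorem exists_augProd_smul_ne_zero {i : ℕ} (h : bracketSeries p P V i ≠ ⊥) :
    ∃ l : List P, l.length = i ∧ ∃ v : V, augProd p l • v ≠ 0 := by
  by_contra! hzero
  refine h ((restrictScalars_eq_bot_iff (ZMod p) _ _).1 (eq_bot_iff.2 ?_))
  refine (restrictScalars_bracketSeries_le_span i).trans (span_le.2 ?_)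
  rintro _ ⟨l, hl, v, rfl⟩
  exact hzero l hl v

variable {ι : Type}

theorem fixedPts_pi : fixedPts p P (ι → V) = pi Set.univ fun _ => fixedPts p P V := by
  ext u
  show (∀ g : P, _ = u) ↔ ∀ i ∈ Set.univ, ∀ g : P, _ = u i
  simp only [Set.mem_univ, true_implies, funext_iff, Pi.smul_apply]
  exact forall_comm

theorem ker_lsmul_pi [Fintype ι] {z : (ZMod p)[P]}
    (h : LinearMap.ker (Algebra.lsmul (ZMod p) (ZMod p) V z) =
      (bracketSub p P V ⊤).restrictScalars (ZMod p)) :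
    LinearMap.ker (Algebra.lsmul (ZMod p) (ZMod p) (ι → V) z) =
      (bracketSub p P (ι → V) ⊤).restrictScalars (ZMod p) := by
  ext u
  rw [← pi_top, bracketSub_pi]
  simp only [LinearMap.mem_ker, Algebra.lsmul_coe, restrictScalars_mem, mem_pi, Set.mem_univ,
    true_implies, funext_iff, Pi.smul_apply, Pi.zero_apply]
  exact forall_congr' fun i => by simpa using SetLike.ext_iff.1 h (u i)

theorem range_lsmul_pi {z : (ZMod p)[P]}
    (h : LinearMap.range (Algebra.lsmul (ZMod p) (ZMod p) V z) = fixedPts p P V) :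
    LinearMap.range (Algebra.lsmul (ZMod p) (ZMod p) (ι → V) z) = fixedPts p P (ι → V) := by
  ext u
  rw [fixedPts_pi, mem_pi]
  simp only [LinearMap.mem_range, Algebra.lsmul_coe, Set.mem_univ, true_implies, ← h, funext_iff,
    Pi.smul_apply]
  exact ⟨fun ⟨w, hw⟩ i => ⟨w i, hw i⟩,
    fun hu => ⟨fun i => (hu i).choose, fun i => (hu i).choose_spec⟩⟩

variable (p P V) in
def fixedSubmodule : Submodule (ZMod p)[P] V where
  toAddSubmonoid := (fixedPts p P V).toAddSubmonoid
  smul_mem' a v hv := by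
    induction a using MonoidAlgebra.induction_on with
    | of h => exact (hv h).symm ▸ hv
    | add a b ha hb => rw [add_smul]; exact (fixedPts p P V).add_mem ha hb
    | smul c a ha => rw [smul_assoc]; exact (fixedPts p P V).smul_mem c ha

end VectorSpace

section Uniserial

variable {p P} [Fact p.Prime] {V : Type} [AddCommGroup V] [Module (ZMod p) V]
  [Module (ZMod p)[P] V] [Module.Finite (ZMod p) V]

theorem natCard_eq_pow_finrank_restrictScalars (N : Submodule (ZMod p)[P] V) :
    Nat.card N = p ^ finrank (ZMod p) (N.restrictScalars (ZMod p)) :=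
  calc Nat.card N = Nat.card (N.restrictScalars (ZMod p)) := rfl
    _ = _ := by rw [Module.natCard_eq_pow_finrank (K := ZMod p), Nat.card_zmod]

theorem exists_mem_fixedPts_ne_zero [Finite P] (hP : IsPGroup p P)
    {X : Submodule (ZMod p)[P] V} (hX : X ≠ ⊥) : ∃ x ∈ X, x ≠ 0 ∧ x ∈ fixedPts p P V := by
  have : Finite V := Module.finite_of_finite (ZMod p)
  let _ : MulAction P X := MulAction.compHom X (of (ZMod p) P)
  have hdvd : p ∣ Nat.card X := by
    rw [natCard_eq_pow_finrank_restrictScalars]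
    refine dvd_pow_self p (Nat.pos_iff_ne_zero.1 ?_)
    rwa [finrank_pos_iff, nontrivial_iff_ne_bot, Ne, restrictScalars_eq_bot_iff]
  obtain ⟨x, hx, hx0⟩ := hP.exists_fixed_point_of_prime_dvd_card_of_fixed_point X hdvd
    (a := 0) fun g => smul_zero (of (ZMod p) P g)
  exact ⟨x, x.2, fun h => hx0 (Subtype.ext h.symm), fun g => congrArg Subtype.val (hx g)⟩

theorem finrank_bracketSub_add_one (huni : UniserialFpP p P V) {N : Submodule (ZMod p)[P] V}
    (hN : N ≠ ⊥) :
    finrank (ZMod p) ((bracketSub p P V N).restrictScalars (ZMod p)) + 1 =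
      finrank (ZMod p) (N.restrictScalars (ZMod p)) := by
  have hcard := AddSubgroup.relIndex_mul_relIndex ⊥ _ _ bot_le
    (show (bracketSub p P V N).toAddSubgroup ≤ N.toAddSubgroup from bracketSub_le N)
  rw [AddSubgroup.relIndex_bot_left, AddSubgroup.relIndex_bot_left, huni N hN] at hcard
  change Nat.card (bracketSub p P V N) * p = Nat.card N at hcard
  rw [natCard_eq_pow_finrank_restrictScalars, natCard_eq_pow_finrank_restrictScalars,
    ← pow_succ] at hcard
  exact Nat.pow_right_injective (Fact.out : p.Prime).two_le hcard

theorem finrank_bracketSeries (huni : UniserialFpP p P V) (i : ℕ) :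
    finrank (ZMod p) ((bracketSeries p P V i).restrictScalars (ZMod p)) =
      finrank (ZMod p) V - i := by
  induction i with
  | zero => rw [bracketSeries_zero, restrictScalars_top, finrank_top, Nat.sub_zero]
  | succ i ih =>
    rw [bracketSeries_succ]
    by_cases hbot : bracketSeries p P V i = ⊥
    · have : bracketSub p P V (bracketSeries p P V i) = ⊥ :=
        eq_bot_iff.2 (hbot ▸ bracketSub_le _)
      rw [hbot, restrictScalars_bot, finrank_bot] at ih
      rw [this, restrictScalars_bot, finrank_bot]
      omega
    · have := finrank_bracketSub_add_one huni hbot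
      omega

theorem bracketSeries_finrank_eq_bot (huni : UniserialFpP p P V) :
    bracketSeries p P V (finrank (ZMod p) V) = ⊥ := by
  have h := finrank_bracketSeries huni (finrank (ZMod p) V)
  rwa [Nat.sub_self, Submodule.finrank_eq_zero, restrictScalars_eq_bot_iff] at h

theorem finrank_fixedPts [Finite P] (hP : IsPGroup p P) [Nontrivial V]
    (huni : UniserialFpP p P V) : finrank (ZMod p) (fixedPts p P V) = 1 := by
  have hne : fixedSubmodule p P V ≠ ⊥ := by
    obtain ⟨v, -, hv0, hv⟩ := exists_mem_fixedPts_ne_zero hP (top_ne_bot (α := Submodule _ V))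
    exact (Submodule.ne_bot_iff _).2 ⟨v, hv, hv0⟩
  have hbr : bracketSub p P V (fixedSubmodule p P V) = ⊥ :=
    span_eq_bot.2 fun _ ⟨g, _, hm, hx⟩ => hx ▸ sub_eq_zero_of_eq (hm g)
  have := finrank_bracketSub_add_one huni hne
  rwa [hbr, restrictScalars_bot, finrank_bot, zero_add, eq_comm] at this

theorem exists_ker_eq_bracketSub_range_eq_fixedPts [Finite P] (hP : IsPGroup p P)
    [Nontrivial V] (huni : UniserialFpP p P V) :
    ∃ z : (ZMod p)[P],
      LinearMap.ker (Algebra.lsmul (ZMod p) (ZMod p) V z) =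
        (bracketSub p P V ⊤).restrictScalars (ZMod p) ∧
      LinearMap.range (Algebra.lsmul (ZMod p) (ZMod p) V z) = fixedPts p P V := by
  set ℓ := finrank (ZMod p) V
  have hℓ : 0 < ℓ := finrank_pos
  have hbot := bracketSeries_finrank_eq_bot huni
  have hne : bracketSeries p P V (ℓ - 1) ≠ ⊥ := by
    intro h
    have := finrank_bracketSeries huni (ℓ - 1)
    rw [h, restrictScalars_bot, finrank_bot] at this
    omega
  obtain ⟨l, hl, v₀, hv₀⟩ := exists_augProd_smul_ne_zero hne
  set ζ := Algebra.lsmul (ZMod p) (ZMod p) V (augProd p l)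
  have hrange_le : LinearMap.range ζ ≤ fixedPts p P V := by
    rintro _ ⟨v, rfl⟩ g
    have := smul_sub_mem_bracketSub
      (augProd_smul_mem_bracketSeries (show v ∈ bracketSeries p P V 0 from mem_top) l) g
    rwa [← bracketSeries_succ, zero_add, hl, Nat.sub_add_cancel hℓ, hbot, mem_bot,
      sub_eq_zero] at this
  have hrange : LinearMap.range ζ = fixedPts p P V := by
    refine eq_of_le_of_finrank_le hrange_le ?_
    rw [finrank_fixedPts hP huni, Nat.one_le_iff_ne_zero, Ne, Submodule.finrank_eq_zero]
    exact fun h => hv₀ (LinearMap.congr_fun (LinearMap.range_eq_bot.1 h) v₀)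
  have hker_ge : (bracketSub p P V ⊤).restrictScalars (ZMod p) ≤ LinearMap.ker ζ := by
    intro v hv
    have := augProd_smul_mem_bracketSeries (show v ∈ bracketSeries p P V 1 from hv) l
    rwa [hl, Nat.add_sub_cancel' hℓ, hbot] at this
  refine ⟨augProd p l, (eq_of_le_of_finrank_le hker_ge ?_).symm, hrange⟩
  have := ζ.finrank_range_add_finrank_ker
  rw [hrange, finrank_fixedPts hP huni] at this
  rw [← bracketSeries_one, finrank_bracketSeries huni]
  omega

end Uniserial

theorem finrank_map_eq_of_ker_eq {K V W W' : Type} [DivisionRing K] [AddCommGroup V]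
    [Module K V] [AddCommGroup W] [Module K W] [AddCommGroup W'] [Module K W']
    [FiniteDimensional K V] {f : V →ₗ[K] W} {g : V →ₗ[K] W'}
    (h : LinearMap.ker f = LinearMap.ker g) (X : Submodule K V) :
    finrank K (X.map f) = finrank K (X.map g) := by
  have hf := (f ∘ₗ X.subtype).finrank_range_add_finrank_ker
  have hg := (g ∘ₗ X.subtype).finrank_range_add_finrank_ker
  rw [LinearMap.ker_comp, h, ← LinearMap.ker_comp] at hf
  rw [LinearMap.range_comp, range_subtype] at hf hg
  omega

section Head

variable {p P} {V : Type} [AddCommGroup V] [Module (ZMod p) V] [Module (ZMod p)[P] V]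
  {z : (ZMod p)[P]}

theorem map_lsmul_le_fixedPts_inf
    (hrange : LinearMap.range (Algebra.lsmul (ZMod p) (ZMod p) V z) = fixedPts p P V)
    (X : Submodule (ZMod p)[P] V) :
    (X.restrictScalars (ZMod p)).map (Algebra.lsmul (ZMod p) (ZMod p) V z) ≤
      fixedPts p P V ⊓ X.restrictScalars (ZMod p) :=
  le_inf (hrange ▸ LinearMap.map_le_range) (by rintro _ ⟨x, hx, rfl⟩; exact X.smul_mem z hx)

theorem eq_top_of_map_mkQ_eq_top {k : ℕ} (hnil : bracketSeries p P V k = ⊥)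
    {W : Submodule (ZMod p)[P] V}
    (hW : (W.restrictScalars (ZMod p)).map
      ((bracketSub p P V ⊤).restrictScalars (ZMod p)).mkQ = ⊤) : W = ⊤ := by
  rw [map_mkQ_eq_top, ← restrictScalars_sup, ← restrictScalars_top (ZMod p) (ZMod p)[P] V,
    (restrictScalars_injective (ZMod p) _ _).eq_iff, sup_comm] at hW
  simpa [hnil] using sup_bracketSeries_eq_top hW k

variable [Fact p.Prime] [Module.Finite (ZMod p) V]

theorem finrank_map_mkQ_eq_finrank_map_lsmul
    (hker : LinearMap.ker (Algebra.lsmul (ZMod p) (ZMod p) V z) =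
      (bracketSub p P V ⊤).restrictScalars (ZMod p))
    (X : Submodule (ZMod p) V) :
    finrank (ZMod p) (X.map ((bracketSub p P V ⊤).restrictScalars (ZMod p)).mkQ) =
      finrank (ZMod p) (X.map (Algebra.lsmul (ZMod p) (ZMod p) V z)) :=
  finrank_map_eq_of_ker_eq (by rw [ker_mkQ, hker]) X

theorem map_lsmul_eq_fixedPts_inf_of_isCompl
    (hker : LinearMap.ker (Algebra.lsmul (ZMod p) (ZMod p) V z) =
      (bracketSub p P V ⊤).restrictScalars (ZMod p))
    (hrange : LinearMap.range (Algebra.lsmul (ZMod p) (ZMod p) V z) = fixedPts p P V)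
    {X L : Submodule (ZMod p)[P] V} (hXL : IsCompl X L) :
    (X.restrictScalars (ZMod p)).map (Algebra.lsmul (ZMod p) (ZMod p) V z) =
      fixedPts p P V ⊓ X.restrictScalars (ZMod p) := by
  set J := (bracketSub p P V ⊤).restrictScalars (ZMod p)
  have hQ : finrank (ZMod p) (V ⧸ J) = finrank (ZMod p) (fixedPts p P V) := by
    rw [← hker, ← hrange]
    exact (LinearMap.quotKerEquivRange _).finrank_eq
  have hcover : finrank (ZMod p) (V ⧸ J) ≤
      finrank (ZMod p) ((X.restrictScalars (ZMod p)).map J.mkQ) +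
        finrank (ZMod p) ((L.restrictScalars (ZMod p)).map J.mkQ) := by
    rw [← finrank_top (ZMod p) (V ⧸ J), ← range_mkQ J, ← Submodule.map_top,
      ← restrictScalars_top (ZMod p) (ZMod p)[P] V, ← hXL.sup_eq_top, restrictScalars_sup,
      Submodule.map_sup]
    exact finrank_add_le_finrank_add_finrank _ _
  have hdisj : finrank (ZMod p) ↥(fixedPts p P V ⊓ X.restrictScalars (ZMod p)) +
      finrank (ZMod p) ↥(fixedPts p P V ⊓ L.restrictScalars (ZMod p)) ≤
        finrank (ZMod p) (fixedPts p P V) := by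
    rw [← finrank_sup_add_finrank_inf_eq, ((disjoint_restrictScalars_iff (ZMod p)).2
      hXL.disjoint).mono inf_le_right inf_le_right |>.eq_bot, finrank_bot, add_zero]
    exact finrank_mono (sup_le inf_le_left inf_le_left)
  have hX := finrank_mono (map_lsmul_le_fixedPts_inf hrange X)
  have hL := finrank_mono (map_lsmul_le_fixedPts_inf hrange L)
  rw [finrank_map_mkQ_eq_finrank_map_lsmul hker, finrank_map_mkQ_eq_finrank_map_lsmul hker]
    at hcover
  exact eq_of_le_of_finrank_le (map_lsmul_le_fixedPts_inf hrange X) (by omega)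

theorem finrank_map_mkQ_eq_of_isCompl
    (hker : LinearMap.ker (Algebra.lsmul (ZMod p) (ZMod p) V z) =
      (bracketSub p P V ⊤).restrictScalars (ZMod p))
    (hrange : LinearMap.range (Algebra.lsmul (ZMod p) (ZMod p) V z) = fixedPts p P V)
    {X L : Submodule (ZMod p)[P] V} (hXL : IsCompl X L) :
    finrank (ZMod p) ((X.restrictScalars (ZMod p)).map
        ((bracketSub p P V ⊤).restrictScalars (ZMod p)).mkQ) =
      finrank (ZMod p) ↥(fixedPts p P V ⊓ X.restrictScalars (ZMod p)) := by
  rw [finrank_map_mkQ_eq_finrank_map_lsmul hker,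
    map_lsmul_eq_fixedPts_inf_of_isCompl hker hrange hXL]

theorem disjoint_of_disjoint_map_mkQ [Finite P] (hP : IsPGroup p P)
    (hker : LinearMap.ker (Algebra.lsmul (ZMod p) (ZMod p) V z) =
      (bracketSub p P V ⊤).restrictScalars (ZMod p))
    {X Y : Submodule (ZMod p)[P] V}
    (hX : (X.restrictScalars (ZMod p)).map (Algebra.lsmul (ZMod p) (ZMod p) V z) =
      fixedPts p P V ⊓ X.restrictScalars (ZMod p))
    (hY : (Y.restrictScalars (ZMod p)).map (Algebra.lsmul (ZMod p) (ZMod p) V z) =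
      fixedPts p P V ⊓ Y.restrictScalars (ZMod p))
    (hXY : Disjoint
      ((X.restrictScalars (ZMod p)).map ((bracketSub p P V ⊤).restrictScalars (ZMod p)).mkQ)
      ((Y.restrictScalars (ZMod p)).map ((bracketSub p P V ⊤).restrictScalars (ZMod p)).mkQ)) :
    Disjoint X Y := by
  rw [disjoint_iff]
  by_contra hne
  obtain ⟨v, ⟨hvX, hvY⟩, hv0, hvC⟩ := exists_mem_fixedPts_ne_zero hP hne
  obtain ⟨x, hx, rfl⟩ :
      v ∈ (X.restrictScalars (ZMod p)).map (Algebra.lsmul (ZMod p) (ZMod p) V z) :=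
    hX ▸ ⟨hvC, hvX⟩
  obtain ⟨y, hy, hxy⟩ :
      z • x ∈ (Y.restrictScalars (ZMod p)).map (Algebra.lsmul (ZMod p) (ZMod p) V z) :=
    hY ▸ ⟨hvC, hvY⟩
  have hq : mkQ _ x = mkQ ((bracketSub p P V ⊤).restrictScalars (ZMod p)) y := by
    rw [mkQ_apply, mkQ_apply, Submodule.Quotient.eq, ← hker, LinearMap.mem_ker, map_sub]
    simp [hxy]
  have hx0 := hXY.eq_bot ▸ (mem_inf.2 ⟨mem_map_of_mem hx, hq ▸ mem_map_of_mem hy⟩)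
  rw [mem_bot, mkQ_apply, Submodule.Quotient.mk_eq_zero, ← hker] at hx0
  exact hv0 hx0

end Head

/-- Greedy choice, one index at a time: an atom not below `T ⊔ ⨆ i ∈ Z, D i` is disjoint
from it, and modularity keeps `T` disjoint from the enlarged supremum. -/
theorem Finset.exists_subset_disjoint_le_sup_iSup {α ι : Type*} [CompleteLattice α]
    [IsModularLattice α] [DecidableEq ι] {D : ι → α} (hD : ∀ i, D i = ⊥ ∨ IsAtom (D i))
    (T : α) (s : Finset ι) :
    ∃ Z ⊆ s, Disjoint T (⨆ i ∈ Z, D i) ∧ ⨆ i ∈ s, D i ≤ T ⊔ ⨆ i ∈ Z, D i := by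
  induction s using Finset.induction_on with
  | empty => exact ⟨∅, subset_refl _, by simp, by simp⟩
  | insert i s _ ih =>
    obtain ⟨Z, hZs, hdisj, hle⟩ := ih
    by_cases h : D i ≤ T ⊔ ⨆ j ∈ Z, D j
    · exact ⟨Z, hZs.trans (subset_insert i s), hdisj, by rw [iSup_insert]; exact sup_le h hle⟩
    · have hDi : Disjoint (T ⊔ ⨆ j ∈ Z, D j) (D i) := by
        rcases hD i with h0 | hat
        · exact h0 ▸ disjoint_bot_right
        · exact (hat.not_le_iff_disjoint.1 h).symm
      refine ⟨insert i Z, insert_subset_insert i hZs, ?_, ?_⟩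
      · rw [iSup_insert, sup_comm]
        exact hdisj.disjoint_sup_right_of_disjoint_sup_left hDi
      · rw [iSup_insert, iSup_insert]
        exact sup_le (le_sup_left.trans le_sup_right) (hle.trans (sup_le_sup_left le_sup_right _))

section Coordinates

variable {p P} {n}

theorem isCompl_coordSub_compl {E : Type} [AddCommGroup E] [Module (ZMod p)[P] E]
    (Z : Set (Fin n)) : IsCompl (coordSub p P E n Z) (coordSub p P E n Zᶜ) := by
  refine ⟨disjoint_def.2 fun u hZ hZc => funext fun i => ?_, codisjoint_iff.2 (eq_top_iff.2 ?_)⟩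
  · by_cases hi : i ∈ Z
    · exact hZc i (Set.notMem_compl_iff.2 hi)
    · exact hZ i hi
  · intro u _
    rw [← Set.indicator_self_add_compl Z u]
    exact add_mem_sup (fun i hi => Set.indicator_of_notMem hi u)
      (fun i hi => Set.indicator_of_notMem hi u)

variable {E : Type} [AddCommGroup E] [Module (ZMod p) E] [Module (ZMod p)[P] E]

theorem restrictScalars_coordSub (Z : Set (Fin n)) :
    (coordSub p P E n Z).restrictScalars (ZMod p) =
      ⨆ i ∈ Z, LinearMap.range (LinearMap.single (ZMod p) (fun _ => E) i) := by
  rw [LinearMap.iSup_range_single_eq_iInf_ker_proj (ZMod p) (fun _ => E) isCompl_compl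
    Z.toFinite]
  ext u
  simp only [restrictScalars_mem, mem_iInf, LinearMap.mem_ker, LinearMap.coe_proj,
    Function.eval, Set.mem_compl_iff]
  rfl

variable [Fact p.Prime] [Module.Finite (ZMod p) E]

theorem finrank_map_mkQ_range_single_le_one (huni : UniserialFpP p P E) {ι : Type} [Fintype ι]
    [DecidableEq ι] (i : ι) :
    finrank (ZMod p) ((LinearMap.range (LinearMap.single (ZMod p) (fun _ => E) i)).map
      ((bracketSub p P (ι → E) ⊤).restrictScalars (ZMod p)).mkQ) ≤ 1 := by
  rw [← LinearMap.range_comp]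
  set f := ((bracketSub p P (ι → E) ⊤).restrictScalars (ZMod p)).mkQ ∘ₗ
    LinearMap.single (ZMod p) (fun _ => E) i
  have hker : (bracketSub p P E ⊤).restrictScalars (ZMod p) ≤ LinearMap.ker f := fun m hm => by
    simpa [f, Submodule.Quotient.mk_eq_zero] using bracketSub_mono le_top
      (map_bracketSub_le (LinearMap.single (ZMod p)[P] (fun _ => E) i) ⊤ (mem_map_of_mem hm))
  have hrank := f.finrank_range_add_finrank_ker
  have hS := finrank_bracketSeries huni 1
  rw [bracketSeries_one] at hS
  have := finrank_mono hker
  omega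

theorem exists_isCompl_map_mkQ_coordSub (huni : UniserialFpP p P E)
    (T : Submodule (ZMod p)
      ((Fin n → E) ⧸ (bracketSub p P (Fin n → E) ⊤).restrictScalars (ZMod p))) :
    ∃ Z : Set (Fin n), IsCompl T (((coordSub p P E n Z).restrictScalars (ZMod p)).map
      ((bracketSub p P (Fin n → E) ⊤).restrictScalars (ZMod p)).mkQ) := by
  set q := ((bracketSub p P (Fin n → E) ⊤).restrictScalars (ZMod p)).mkQ
  have hD : ∀ i, (LinearMap.range (LinearMap.single (ZMod p) (fun _ => E) i)).map q = ⊥ ∨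
      IsAtom ((LinearMap.range (LinearMap.single (ZMod p) (fun _ => E) i)).map q) := fun i => by
    rcases Nat.le_one_iff_eq_zero_or_eq_one.1 (finrank_map_mkQ_range_single_le_one huni i)
      with h | h
    · exact .inl (Submodule.finrank_eq_zero.1 h)
    · exact .inr (Submodule.isAtom_iff_finrank_eq_one.2 h)
  have hmap : ∀ Z : Finset (Fin n),
      ⨆ i ∈ Z, (LinearMap.range (LinearMap.single (ZMod p) (fun _ => E) i)).map q =
        ((coordSub p P E n Z).restrictScalars (ZMod p)).map q := fun Z => by
    simp only [restrictScalars_coordSub, Submodule.map_iSup, Finset.mem_coe]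
  obtain ⟨Z, -, hdisj, hle⟩ := Finset.univ.exists_subset_disjoint_le_sup_iSup hD T
  refine ⟨Z, ?_⟩
  have htop : coordSub p P E n Set.univ = ⊤ :=
    eq_top_iff.2 fun u _ i hi => absurd (Set.mem_univ i) hi
  rw [hmap, Finset.coe_univ, htop, restrictScalars_top, Submodule.map_top, range_mkQ] at hle
  exact ⟨hmap Z ▸ hdisj, codisjoint_iff.2 (top_unique (hmap Z ▸ hle))⟩

theorem exists_isCompl_coordSub_of_finrank_eq [Finite P] (hP : IsPGroup p P)
    (huni : UniserialFpP p P E) {z : (ZMod p)[P]}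
    (hker : LinearMap.ker (Algebra.lsmul (ZMod p) (ZMod p) (Fin n → E) z) =
      (bracketSub p P (Fin n → E) ⊤).restrictScalars (ZMod p))
    (hrange : LinearMap.range (Algebra.lsmul (ZMod p) (ZMod p) (Fin n → E) z) =
      fixedPts p P (Fin n → E))
    {N : Submodule (ZMod p)[P] (Fin n → E)}
    (h : finrank (ZMod p) ((N.restrictScalars (ZMod p)).map
        ((bracketSub p P (Fin n → E) ⊤).restrictScalars (ZMod p)).mkQ) =
      finrank (ZMod p) ↥(fixedPts p P (Fin n → E) ⊓ N.restrictScalars (ZMod p))) :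
    ∃ Z, IsCompl N (coordSub p P E n Z) := by
  have hN := eq_of_le_of_finrank_le (map_lsmul_le_fixedPts_inf hrange N)
    (by rw [← finrank_map_mkQ_eq_finrank_map_lsmul hker, h])
  have hnil : bracketSeries p P (Fin n → E) (finrank (ZMod p) E) = ⊥ := by
    rw [bracketSeries_pi, bracketSeries_finrank_eq_bot huni, pi_univ_bot]
  obtain ⟨Z, hZ⟩ := exists_isCompl_map_mkQ_coordSub huni ((N.restrictScalars (ZMod p)).map
    ((bracketSub p P (Fin n → E) ⊤).restrictScalars (ZMod p)).mkQ)
  refine ⟨Z, disjoint_of_disjoint_map_mkQ hP hker hN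
    (map_lsmul_eq_fixedPts_inf_of_isCompl hker hrange (isCompl_coordSub_compl Z)) hZ.disjoint,
    codisjoint_iff.2 (eq_top_of_map_mkQ_eq_top hnil ?_)⟩
  rw [restrictScalars_sup, Submodule.map_sup]
  exact hZ.codisjoint.eq_top

end Coordinates

theorem Submodule.isCompl_toAddSubgroup_iff {R E : Type*} [Ring R] [AddCommGroup E]
    [Module R E] {N L : Submodule R E} :
    IsCompl N.toAddSubgroup L.toAddSubgroup ↔ IsCompl N L := by
  rw [AddSubgroup.toIntSubmodule.isCompl_iff, toIntSubmodule_toAddSubgroup,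
    toIntSubmodule_toAddSubgroup, isCompl_restrictScalars_iff]

namespace SemidirectProduct

def leftPreimage {N G : Type*} [Group N] [Group G] {φ : G →* MulAut N} (K : Subgroup N)
    (hK : ∀ g, ∀ k ∈ K, φ g k ∈ K) : Subgroup (N ⋊[φ] G) where
  carrier := {x | x.left ∈ K}
  one_mem' := K.one_mem
  mul_mem' ha hb := K.mul_mem ha (hK _ _ hb)
  inv_mem' ha := hK _ _ (K.inv_mem ha)

theorem isCompl_map_inl_sup_range_inr {N G : Type*} [CommGroup N] [Group G]
    {φ : G →* MulAut N} {K K' : Subgroup N} (hKK' : IsCompl K K')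
    (hK' : ∀ g, ∀ k ∈ K', φ g k ∈ K') :
    IsCompl (K.map inl) (K'.map inl ⊔ (inr : G →* N ⋊[φ] G).range) := by
  refine ⟨?_, codisjoint_iff.2 (eq_top_iff.2 fun x _ => ?_)⟩
  · have hle : K'.map inl ⊔ (inr : G →* N ⋊[φ] G).range ≤ leftPreimage K' hK' :=
      sup_le (Subgroup.map_le_iff_le_comap.2 fun k hk => hk)
        (by rintro _ ⟨g, rfl⟩; exact K'.one_mem)
    refine (Subgroup.disjoint_def.2 fun {x} hxK hxK' => ?_).mono_right hle
    obtain ⟨k, hk, rfl⟩ := Subgroup.mem_map.1 hxK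
    rw [Subgroup.disjoint_def.1 hKK'.disjoint hk (hxK' : k ∈ K'), map_one]
  · obtain ⟨a, ha, b, hb, hab⟩ := Subgroup.mem_sup.1 (hKK'.sup_eq_top ▸ Subgroup.mem_top x.left)
    rw [← inl_left_mul_inr_right x, ← hab, map_mul, mul_assoc]
    exact Subgroup.mul_mem _ (Subgroup.mem_sup_left (Subgroup.mem_map_of_mem _ ha))
      (Subgroup.mem_sup_right (Subgroup.mul_mem _
        (Subgroup.mem_sup_left (Subgroup.mem_map_of_mem _ hb))
        (Subgroup.mem_sup_right ⟨x.right, rfl⟩)))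

end SemidirectProduct

/-- Let `P` be a finite `p`-group and `M` a nonzero finite-dimensional `F_p P`-module
on which `P` acts uniserially.  For a submodule `N` of `M^n` the following are
equivalent: (1) `N` is a direct summand of `M^n`; (2) `(N + [P,M^n])/[P,M^n]` and
`C_N(P)` have the same `F_p`-dimension; (3) `M^n = N ⊕ M_Z` for some subset
`Z ⊆ {1, …, n}`.  Moreover, for any complement `L` of `N` in `M^n`, the subgroup
`L ⋊ P` is a complement of `N` in `M^n ⋊ P`. -/
theorem direct_summand_tfae_and_semidirect_complement
    (hp : p.Prime) [Finite P] (hP : IsPGroup p P)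
    [Module.Finite (ZMod p) M] [Nontrivial M]
    (huni : UniserialFpP p P M)
    (N : Submodule (MonoidAlgebra (ZMod p) P) (Fin n → M)) :
    (((∃ L : Submodule (MonoidAlgebra (ZMod p) P) (Fin n → M),
        N ⊓ L = ⊥ ∧ N ⊔ L = ⊤) ↔
      Module.finrank (ZMod p)
        ↥(Submodule.map
            ((bracketSub p P (Fin n → M)
              (⊤ : Submodule (MonoidAlgebra (ZMod p) P) (Fin n → M))).restrictScalars
                (ZMod p)).mkQ
            (N.restrictScalars (ZMod p)))
        = Module.finrank (ZMod p)
            ↥(fixedPts p P (Fin n → M) ⊓ N.restrictScalars (ZMod p))) ∧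
    ((∃ L : Submodule (MonoidAlgebra (ZMod p) P) (Fin n → M),
        N ⊓ L = ⊥ ∧ N ⊔ L = ⊤) ↔
      (∃ Z : Set (Fin n),
        N ⊓ coordSub p P M n Z = ⊥ ∧ N ⊔ coordSub p P M n Z = ⊤))) ∧
    (∀ L : Submodule (MonoidAlgebra (ZMod p) P) (Fin n → M),
      N ⊓ L = ⊥ → N ⊔ L = ⊤ →
      liftSub p P M n N ⊓ semiCompl p P M n L = ⊥ ∧
      liftSub p P M n N ⊔ semiCompl p P M n L = ⊤) := by
  have : Fact p.Prime := ⟨hp⟩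
  obtain ⟨z, hkerM, hrangeM⟩ := exists_ker_eq_bracketSub_range_eq_fixedPts hP huni
  have hker := ker_lsmul_pi (ι := Fin n) hkerM
  have hrange := range_lsmul_pi (ι := Fin n) hrangeM
  have one_two := fun L (hNL : IsCompl N L) => finrank_map_mkQ_eq_of_isCompl hker hrange hNL
  have two_three := fun h => exists_isCompl_coordSub_of_finrank_eq hP huni hker hrange (N := N) h
  simp only [← disjoint_iff, ← codisjoint_iff, ← isCompl_iff]
  refine ⟨⟨⟨fun ⟨L, hNL⟩ => one_two L hNL, fun h => ?_⟩,
    ⟨fun ⟨L, hNL⟩ => two_three (one_two L hNL), fun ⟨Z, hZ⟩ => ⟨_, hZ⟩⟩⟩, fun L h₁ h₂ => ?_⟩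
  · obtain ⟨Z, hZ⟩ := two_three h
    exact ⟨_, hZ⟩
  · exact SemidirectProduct.isCompl_map_inl_sup_range_inr
      (AddSubgroup.toSubgroup.isCompl (Submodule.isCompl_toAddSubgroup_iff.2 ⟨h₁, h₂⟩))
      fun g _ hk => L.smul_mem _ hk
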